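/- Let G be a finitely generated group with finite generating set S, and suppose there exists N ⊆ G such that (i) |N ∩ B_S(n)| / |B_S(n)| → 0 as n → ∞, and (ii) |C_G(g) ∩ B_S(n)| / |B_S(n)| → 0 uniformly over g ∈ G \ N. Then dc_S(G) := limsup_n |{(a,b) ∈ B_S(n)² : ab = ba}| / |B_S(n)|² = 0. -/

import Mathlib

/-- The word length of `g` with respect to the generating set `S`:
the least length of a word in `S ∪ S⁻¹` representing `g`. -/
noncomputable def wordLength {G : Type*} [Group G] (S : Set G) (g : G) : ℕ :=
  sInf {n | ∃ l : List G, (∀ x ∈ l, x ∈ S ∨ x⁻¹ ∈ S) ∧ l.prod = g ∧ l.length = n}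

/-- The ball of radius `n` in the Cayley graph of `G` with respect to `S`. -/
def ball {G : Type*} [Group G] (S : Set G) (n : ℕ) : Set G :=
  {g | wordLength S g ≤ n}

/-- The translation length `τ_S(g) = limsup_n |g^n|_S / n`. -/
noncomputable def translationLength {G : Type*} [Group G] (S : Set G) (g : G) : ℝ :=
  Filter.limsup (fun n : ℕ => (wordLength S (g ^ n) : ℝ) / n) Filter.atTop

/-!
Counting commuting pairs `(a, b)` of a ball `B` by their first coordinate gives
`∑_{a ∈ B} |C(a) ∩ B|`. The terms with `a ∈ N` contribute at most `|N ∩ B| |B|`, the others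
at most `ε |B|` each, so the commuting density of `B` is at most `|N ∩ B| / |B| + ε`, and both
summands are eventually small.
-/

open Filter Finset

section

variable {G : Type*} [Group G]

theorem card_commuting_pairs_le [DecidableEq G] (s : Finset G) (N : Set G)
    [DecidablePred (· ∈ N)] {c : ℝ} (hc₀ : 0 ≤ c)
    (hc : ∀ a ∈ s, a ∉ N → (#{b ∈ s | a * b = b * a} : ℝ) ≤ c) :
    (#{p ∈ s ×ˢ s | p.1 * p.2 = p.2 * p.1} : ℝ) ≤ #{a ∈ s | a ∈ N} * #s + #s * c := by
  have hfiber : (#{p ∈ s ×ˢ s | p.1 * p.2 = p.2 * p.1} : ℝ)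
      = ∑ a ∈ s, (#{b ∈ s | a * b = b * a} : ℝ) := by
    simp only [card_filter, sum_product, Nat.cast_sum]
  rw [hfiber, ← sum_filter_add_sum_filter_not s (· ∈ N)]
  gcongr
  · refine (sum_le_card_nsmul _ _ _ fun a _ => ?_).trans_eq (nsmul_eq_mul _ _)
    exact_mod_cast card_filter_le _ _
  · refine (sum_le_card_nsmul _ _ c fun a ha => ?_).trans ?_
    · exact hc a (mem_filter.1 ha).1 (mem_filter.1 ha).2
    · rw [nsmul_eq_mul]
      gcongr
      exact filter_subset _ s

theorem commuting_pairs_density_le (B N : Set G) {ε : ℝ} (hε : 0 ≤ ε)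
    (h : ∀ g ∉ N, (Nat.card ((Subgroup.centralizer {g} : Set G) ∩ B : Set G) : ℝ) /
      Nat.card B ≤ ε) :
    (Nat.card {p : G × G | p.1 ∈ B ∧ p.2 ∈ B ∧ p.1 * p.2 = p.2 * p.1} : ℝ) /
        (Nat.card B : ℝ) ^ 2 ≤ Nat.card (N ∩ B : Set G) / Nat.card B + ε := by
  classical
  rcases B.finite_or_infinite with hB | hB
  swap
  · have := hB.to_subtype
    simpa [Nat.card_eq_zero_of_infinite] using hε
  obtain ⟨s, rfl⟩ := hB.exists_finset_coe
  rcases s.eq_empty_or_nonempty with rfl | hs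
  · simpa using hε
  have hpairs : {p : G × G | p.1 ∈ (s : Set G) ∧ p.2 ∈ (s : Set G) ∧ p.1 * p.2 = p.2 * p.1}
      = ↑{p ∈ s ×ˢ s | p.1 * p.2 = p.2 * p.1} := by
    ext; simp [and_assoc]
  have hN : N ∩ s = ↑{a ∈ s | a ∈ N} := by
    ext; simp [and_comm]
  have hC : ∀ g, (Subgroup.centralizer {g} : Set G) ∩ s = ↑{b ∈ s | g * b = b * g} := by
    intro g; ext; simp [Subgroup.mem_centralizer_singleton_iff, and_comm, eq_comm]
  have hs₀ : (0 : ℝ) < #s := by exact_mod_cast hs.card_pos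
  simp only [hpairs, hN, hC, Nat.card_coe_set_eq, Set.ncard_coe_finset] at h ⊢
  have hc : ∀ a ∈ s, a ∉ N → (#{b ∈ s | a * b = b * a} : ℝ) ≤ ε * #s := fun a _ ha =>
    (div_le_iff₀ hs₀).1 (h a ha)
  calc _ ≤ ((#{a ∈ s | a ∈ N} : ℝ) * #s + #s * (ε * #s)) / (#s : ℝ) ^ 2 := by
        gcongr; exact card_commuting_pairs_le s N (by positivity) hc
    _ = _ := by field_simp

end

theorem dc_eq_zero_of_negligible_general {G : Type*} [Group G]
    (S : Set G) (N : Set G)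
    (h1 : Filter.Tendsto
      (fun n : ℕ => (Nat.card (N ∩ ball S n : Set G) : ℝ) / (Nat.card (ball S n) : ℝ))
      Filter.atTop (nhds 0))
    (h2 : ∀ ε > (0 : ℝ), ∃ n₀ : ℕ, ∀ n ≥ n₀, ∀ g ∉ N,
      (Nat.card ((Subgroup.centralizer {g} : Set G) ∩ ball S n : Set G) : ℝ) /
        (Nat.card (ball S n) : ℝ) < ε) :
    Filter.limsup
      (fun n : ℕ =>
        (Nat.card {p : G × G | p.1 ∈ ball S n ∧ p.2 ∈ ball S n ∧ p.1 * p.2 = p.2 * p.1} : ℝ) /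
          (Nat.card (ball S n) : ℝ) ^ 2)
      Filter.atTop = 0 := by
  refine Tendsto.limsup_eq (tendsto_order.2 ⟨fun a ha => Eventually.of_forall fun n =>
    ha.trans_le (by positivity), fun a ha => ?_⟩)
  obtain ⟨n₀, hn₀⟩ := h2 (a / 2) (by positivity)
  filter_upwards [eventually_ge_atTop n₀, (tendsto_order.1 h1).2 (a / 2) (by positivity)]
    with n hn hN
  calc _ ≤ (Nat.card (N ∩ ball S n : Set G) : ℝ) / Nat.card (ball S n) + a / 2 :=
        commuting_pairs_density_le _ N (by positivity) fun g hg => (hn₀ n hn g hg).le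
    _ < a := by linarith

/-- If `N ⊆ G` is negligible and the centralizer densities tend to `0`
uniformly over `g ∈ G \ N`, then the degree of commutativity
`dc_S(G) = limsup_n |{(a,b) ∈ B_S(n)² : ab = ba}| / |B_S(n)|²` is `0`. -/
theorem dc_eq_zero_of_negligible {G : Type*} [Group G]
    (S : Set G) (hS : S.Finite) (hgen : Subgroup.closure S = ⊤) (N : Set G)
    (h1 : Filter.Tendsto
      (fun n : ℕ => (Nat.card (N ∩ ball S n : Set G) : ℝ) / (Nat.card (ball S n) : ℝ))
      Filter.atTop (nhds 0))
    (h2 : ∀ ε > (0 : ℝ), ∃ n₀ : ℕ, ∀ n ≥ n₀, ∀ g ∉ N,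
      (Nat.card ((Subgroup.centralizer {g} : Set G) ∩ ball S n : Set G) : ℝ) /
        (Nat.card (ball S n) : ℝ) < ε) :
    Filter.limsup
      (fun n : ℕ =>
        (Nat.card {p : G × G | p.1 ∈ ball S n ∧ p.2 ∈ ball S n ∧ p.1 * p.2 = p.2 * p.1} : ℝ) /
          (Nat.card (ball S n) : ℝ) ^ 2)
      Filter.atTop = 0 :=
  dc_eq_zero_of_negligible_general S N h1 h2
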